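/- Let d ≥ 1, ε > 0, let V : ℝ^d → ℝ be Lipschitz with constant L (i.e. |V(a)−V(b)| ≤ L|a−b| for all a,b), let Ψ ∈ L²(ℝ^d;ℂ), and let φ be a Schwartz function on ℝ^d × ℝ^d. Then the integrand below is absolutely integrable and | ∫_{ℝ^d×ℝ^d} [ (V(x+εy/2) − V(x−εy/2))/ε ] · Ψ(x+εy/2) · conj(Ψ(x−εy/2)) · (F_pφ)(x,y) d(x,y) | ≤ L · ‖Ψ‖² · ∫_{ℝ^d} |y| · sup_{x∈ℝ^d} |(F_pφ)(x,y)| dy. -/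

import Mathlib

/-!
The difference quotient of the `L`-Lipschitz potential is bounded by `L ‖y‖`, and
`|F_pφ(x, y)| ≤ g(y) := sup_x |F_pφ(x, y)|`. For fixed `y`, Cauchy–Schwarz and translation
invariance of Lebesgue measure give `∫ |Ψ(x + εy/2)| |Ψ(x - εy/2)| dx ≤ ‖Ψ‖²`, so by Tonelli the
integral of the modulus of the integrand is at most `L ‖Ψ‖² ∫ ‖y‖ g(y) dy`. That last integral is
finite: `F_pφ(x, ·)` is a rescaled Fourier transform of the slice `φ(x, ·)`, whose Schwartz
seminorms are bounded by those of `φ` uniformly in `x`, so `g` decays faster than any power.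
-/

open MeasureTheory Filter
open scoped RealInnerProductSpace

/-- The partial Fourier transform in the momentum variable:
`(F_pφ)(x,y) = ∫ φ(x,p) e^{-ip·y} dp`. -/
noncomputable def partialFourierP (d : ℕ)
    (φ : EuclideanSpace ℝ (Fin d) × EuclideanSpace ℝ (Fin d) → ℂ)
    (x y : EuclideanSpace ℝ (Fin d)) : ℂ :=
  ∫ p : EuclideanSpace ℝ (Fin d), φ (x, p) * Complex.exp (-Complex.I * (⟪p, y⟫ : ℂ))

open scoped ContDiff FourierTransform SchwartzMap

section Slice

variable {G H W : Type*} [NormedAddCommGroup G] [NormedSpace ℝ G]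
  [NormedAddCommGroup H] [NormedSpace ℝ H] [NormedAddCommGroup W] [NormedSpace ℝ W]

theorem norm_iteratedFDeriv_comp_prodMk_le {f : G × H → W} (hf : ContDiff ℝ ∞ f) (x : G)
    (n : ℕ) (p : H) :
    ‖iteratedFDeriv ℝ n (fun p => f (x, p)) p‖ ≤ ‖iteratedFDeriv ℝ n f (x, p)‖ := by
  have hslice : (fun p => f (x, p)) =
      (fun q => f ((x, 0) + q)) ∘ ContinuousLinearMap.inr ℝ G H := by
    ext p; simp
  have hshift : ContDiff ℝ ∞ (fun q => f ((x, 0) + q)) :=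
    hf.comp (contDiff_const.add contDiff_id)
  have hp : (x, (0 : H)) + ContinuousLinearMap.inr ℝ G H p = (x, p) := by simp
  rw [hslice, ContinuousLinearMap.iteratedFDeriv_comp_right _ hshift _ (mod_cast le_top),
    iteratedFDeriv_comp_add_left, hp]
  exact (ContinuousMultilinearMap.norm_compContinuousLinearMap_le _ _).trans
    (mul_le_of_le_one_right (norm_nonneg _) (Finset.prod_le_one (fun _ _ => norm_nonneg _)
      fun _ _ => ContinuousLinearMap.norm_inr_le_one ℝ G H))

namespace SchwartzMap

theorem pow_mul_norm_iteratedFDeriv_comp_prodMk_le (𝕜 : Type*) [NormedField 𝕜]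
    [NormedSpace 𝕜 W] [SMulCommClass ℝ 𝕜 W] (φ : 𝓢(G × H, W)) (x : G) (k n : ℕ) (p : H) :
    ‖p‖ ^ k * ‖iteratedFDeriv ℝ n (fun p => φ (x, p)) p‖ ≤ SchwartzMap.seminorm 𝕜 k n φ := by
  calc _ ≤ ‖(x, p)‖ ^ k * ‖iteratedFDeriv ℝ n φ (x, p)‖ := by
        gcongr
        · exact norm_snd_le (x, p)
        · exact norm_iteratedFDeriv_comp_prodMk_le φ.smooth' x n p
    _ ≤ _ := le_seminorm 𝕜 k n φ (x, p)

noncomputable def slice (φ : 𝓢(G × H, W)) (x : G) : 𝓢(H, W) where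
  toFun p := φ (x, p)
  smooth' := φ.smooth'.comp (contDiff_const.prodMk contDiff_id)
  decay' k n := ⟨_, pow_mul_norm_iteratedFDeriv_comp_prodMk_le ℝ φ x k n⟩

@[simp] theorem slice_apply (φ : 𝓢(G × H, W)) (x : G) (p : H) : slice φ x p = φ (x, p) := rfl

theorem seminorm_slice_le (𝕜 : Type*) [NormedField 𝕜] [NormedSpace 𝕜 W] [SMulCommClass ℝ 𝕜 W]
    (φ : 𝓢(G × H, W)) (x : G) (k n : ℕ) :
    SchwartzMap.seminorm 𝕜 k n (slice φ x) ≤ SchwartzMap.seminorm 𝕜 k n φ :=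
  seminorm_le_bound 𝕜 k n _ (apply_nonneg _ _)
    (pow_mul_norm_iteratedFDeriv_comp_prodMk_le 𝕜 φ x k n)

end SchwartzMap

end Slice

namespace SchwartzMap

variable {G : Type*} [NormedAddCommGroup G] [NormedSpace ℝ G]
  {V : Type*} [NormedAddCommGroup V] [InnerProductSpace ℝ V] [FiniteDimensional ℝ V]
  [MeasurableSpace V] [BorelSpace V] {E : Type*} [NormedAddCommGroup E] [NormedSpace ℂ E]

/-- Continuity of `𝓕` on `𝓢(V, E)` bounds a seminorm of `𝓕 f` by finitely many seminorms of `f`,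
and slicing does not increase seminorms. -/
theorem exists_bound_pow_mul_norm_fourier_slice (φ : 𝓢(G × V, E)) (k : ℕ) :
    ∃ C, ∀ x w, ‖w‖ ^ k * ‖𝓕 (slice φ x : V → E) w‖ ≤ C := by
  let q : Seminorm ℂ 𝓢(V, E) :=
    (SchwartzMap.seminorm ℂ k 0).comp (FourierTransform.fourierCLM ℂ 𝓢(V, E)).toLinearMap
  have hq : Continuous q :=
    ((schwartz_withSeminorms ℂ V E).continuous_seminorm (k, 0)).comp
      FourierTransform.continuous_fourier
  obtain ⟨s, C, -, hle⟩ := Seminorm.bound_of_continuous (schwartz_withSeminorms ℂ V E) q hq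
  refine ⟨C * s.sup (schwartzSeminormFamily ℂ (G × V) E) φ, fun x w => ?_⟩
  calc ‖w‖ ^ k * ‖𝓕 (slice φ x : V → E) w‖ ≤ q (slice φ x) :=
        norm_pow_mul_le_seminorm ℂ (𝓕 (slice φ x)) k w
    _ ≤ C * s.sup (schwartzSeminormFamily ℂ V E) (slice φ x) := hle (slice φ x)
    _ ≤ C * s.sup (schwartzSeminormFamily ℂ (G × V) E) φ := by
        gcongr
        refine Seminorm.finset_sup_apply_le (apply_nonneg _ _) fun i hi => ?_
        exact (seminorm_slice_le ℂ φ x i.1 i.2).trans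
          (Seminorm.le_finset_sup_apply (p := schwartzSeminormFamily ℂ (G × V) E) hi)

end SchwartzMap

theorem le_mul_rpow_neg_of_pow_mul_le {t a C : ℝ} (ht : 0 < t) {k : ℕ} (h : t ^ k * a ≤ C) :
    a ≤ C * t ^ (-(k : ℝ)) := by
  rw [Real.rpow_neg ht.le, Real.rpow_natCast, ← div_eq_mul_inv, le_div_iff₀ (by positivity)]
  linarith

section SupNorm

variable {X E W : Type*} [NormedAddCommGroup E] [NormedAddCommGroup W]
  {F : X → E → W} {C : ℝ} {k : ℕ}

theorem bddAbove_range_norm_of_one_add_norm_pow_mul_le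
    (hC : ∀ x y, (1 + ‖y‖) ^ k * ‖F x y‖ ≤ C) (y : E) :
    BddAbove (Set.range fun x => ‖F x y‖) := by
  refine ⟨C, ?_⟩
  rintro _ ⟨x, rfl⟩
  exact (le_mul_of_one_le_left (norm_nonneg _) (one_le_pow₀ (by simp))).trans (hC x y)

theorem one_add_norm_pow_mul_iSup_norm_le [Nonempty X]
    (hC : ∀ x y, (1 + ‖y‖) ^ k * ‖F x y‖ ≤ C) (y : E) :
    (1 + ‖y‖) ^ k * ⨆ x, ‖F x y‖ ≤ C := by
  have hpos : 0 < (1 + ‖y‖) ^ k := by positivity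
  rw [mul_comm, ← le_div_iff₀ hpos]
  exact ciSup_le fun x => by rw [le_div_iff₀ hpos, mul_comm]; exact hC x y

theorem integrable_norm_mul_iSup_norm [TopologicalSpace X] [Nonempty X] [NormedSpace ℝ E]
    [FiniteDimensional ℝ E] [MeasurableSpace E] [BorelSpace E] {μ : Measure E}
    [μ.IsAddHaarMeasure] (hF : ∀ x, Continuous (F x))
    (hC : ∀ x y, (1 + ‖y‖) ^ (Module.finrank ℝ E + 2) * ‖F x y‖ ≤ C) :
    Integrable (fun y => ‖y‖ * ⨆ x, ‖F x y‖) μ := by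
  set n := Module.finrank ℝ E
  have hsup_nonneg : ∀ y, 0 ≤ ⨆ x, ‖F x y‖ := fun y => Real.iSup_nonneg fun x => norm_nonneg _
  have hsup_meas : Measurable fun y => ⨆ x, ‖F x y‖ :=
    (lowerSemicontinuous_ciSup (bddAbove_range_norm_of_one_add_norm_pow_mul_le hC)
      fun x => (hF x).norm.lowerSemicontinuous).measurable
  have hdecay : ∀ y : E, ‖y‖ * ⨆ x, ‖F x y‖ ≤ C * (1 + ‖y‖) ^ (-((n + 1 : ℕ) : ℝ)) := by
    intro y
    refine le_mul_rpow_neg_of_pow_mul_le (by positivity) ?_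
    calc (1 + ‖y‖) ^ (n + 1) * (‖y‖ * ⨆ x, ‖F x y‖)
        ≤ (1 + ‖y‖) ^ (n + 1) * ((1 + ‖y‖) * ⨆ x, ‖F x y‖) := by
          gcongr
          · exact hsup_nonneg y
          · linarith
      _ = (1 + ‖y‖) ^ (n + 2) * ⨆ x, ‖F x y‖ := by ring
      _ ≤ C := one_add_norm_pow_mul_iSup_norm_le hC y
  refine ((integrable_one_add_norm (r := ((n + 1 : ℕ) : ℝ))
    (by push_cast; exact lt_add_one _)).const_mul C).mono'
    (continuous_norm.measurable.mul hsup_meas).aestronglyMeasurable (Eventually.of_forall ?_)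
  intro y
  rw [Real.norm_of_nonneg (mul_nonneg (norm_nonneg _) (hsup_nonneg y))]
  exact hdecay y

end SupNorm

section PartialFourier

variable {d : ℕ}

local notation "E" => EuclideanSpace ℝ (Fin d)

theorem partialFourierP_eq_fourier_slice (φ : 𝓢(E × E, ℂ)) (x y : E) :
    partialFourierP d (fun q => φ q) x y =
      𝓕 (φ.slice x : E → ℂ) ((2 * Real.pi)⁻¹ • y) := by
  rw [Real.fourier_eq']
  refine integral_congr_ae (Eventually.of_forall fun p => ?_)
  have h2π : 2 * Real.pi ≠ 0 := by positivity
  simp only [SchwartzMap.slice_apply, real_inner_smul_right, smul_eq_mul]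
  rw [mul_comm]
  congr 2
  push_cast
  field_simp

theorem exists_bound_partialFourierP (φ : 𝓢(E × E, ℂ)) (k : ℕ) :
    ∃ C, ∀ x y, (1 + ‖y‖) ^ k * ‖partialFourierP d (fun q => φ q) x y‖ ≤ C := by
  obtain ⟨C₀, hC₀⟩ := φ.exists_bound_pow_mul_norm_fourier_slice 0
  obtain ⟨Cₖ, hCₖ⟩ := φ.exists_bound_pow_mul_norm_fourier_slice k
  refine ⟨(2 * Real.pi) ^ k * (2 ^ (k - 1) * (C₀ + Cₖ)), fun x y => ?_⟩
  set w := (2 * Real.pi)⁻¹ • y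
  set Fw := 𝓕 (φ.slice x : E → ℂ) w
  have hy : 1 + ‖y‖ ≤ 2 * Real.pi * (1 + ‖w‖) := by
    have hy' : ‖y‖ = 2 * Real.pi * ‖w‖ := by
      rw [norm_smul, Real.norm_of_nonneg (by positivity), ← mul_assoc,
        mul_inv_cancel₀ (by positivity), one_mul]
    nlinarith [Real.pi_gt_three, norm_nonneg w]
  have hw := add_pow_le zero_le_one (norm_nonneg w) k
  rw [one_pow] at hw
  specialize hC₀ x w
  specialize hCₖ x w
  rw [pow_zero, one_mul] at hC₀
  rw [partialFourierP_eq_fourier_slice]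
  calc (1 + ‖y‖) ^ k * ‖Fw‖ ≤ (2 * Real.pi) ^ k * ((1 + ‖w‖) ^ k * ‖Fw‖) := by
        rw [← mul_assoc, ← mul_pow]; gcongr
    _ ≤ (2 * Real.pi) ^ k * (2 ^ (k - 1) * (1 + ‖w‖ ^ k) * ‖Fw‖) := by gcongr
    _ ≤ (2 * Real.pi) ^ k * (2 ^ (k - 1) * (C₀ + Cₖ)) := by
        rw [mul_assoc, add_mul, one_mul]
        gcongr

theorem continuous_partialFourierP (φ : 𝓢(E × E, ℂ)) :
    Continuous fun z : E × E => partialFourierP d (fun q => φ q) z.1 z.2 := by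
  obtain ⟨C, hC⟩ : ∃ C, ∀ x p : E, (1 + ‖p‖) ^ (d + 1) * ‖φ (x, p)‖ ≤ C := by
    refine ⟨_, fun x p => le_trans ?_ (φ.one_add_le_sup_seminorm_apply (𝕜 := ℝ)
      (m := (d + 1, 0)) le_rfl le_rfl (x, p))⟩
    rw [norm_iteratedFDeriv_zero]
    gcongr
    exact norm_snd_le (x, p)
  refine continuous_of_dominated (bound := fun p : E => C * (1 + ‖p‖) ^ (-((d + 1 : ℕ) : ℝ)))
    (fun z => Continuous.aestronglyMeasurable (by fun_prop))
    (fun z => Eventually.of_forall fun p => ?_)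
    ((integrable_one_add_norm (by simp)).const_mul C)
    (Eventually.of_forall fun p => by fun_prop)
  rw [norm_mul, Complex.norm_exp]
  simpa using le_mul_rpow_neg_of_pow_mul_le (by positivity) (hC z.1 p)

end PartialFourier

theorem LinearMap.quasiMeasurePreserving_of_surjective {E F : Type*}
    [NormedAddCommGroup E] [NormedSpace ℝ E] [FiniteDimensional ℝ E] [MeasurableSpace E]
    [BorelSpace E] [NormedAddCommGroup F] [NormedSpace ℝ F] [MeasurableSpace F] [BorelSpace F]
    (μ : Measure E) (ν : Measure F) [μ.IsAddHaarMeasure] [ν.IsAddHaarMeasure]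
    {L : E →ₗ[ℝ] F} (hL : Function.Surjective L) : Measure.QuasiMeasurePreserving L μ ν := by
  obtain ⟨c, -, hc⟩ := L.exists_map_addHaar_eq_smul_addHaar μ ν hL
  exact ⟨L.continuous_of_finiteDimensional.measurable, by
    rw [Measure.AbsolutelyContinuous, hc]; exact Measure.smul_absolutelyContinuous⟩

theorem MeasureTheory.AEStronglyMeasurable.comp_fst_add_smul_snd {E W : Type*}
    [NormedAddCommGroup E] [NormedSpace ℝ E] [FiniteDimensional ℝ E] [MeasurableSpace E]
    [BorelSpace E] {μ : Measure E} [μ.IsAddHaarMeasure] [TopologicalSpace W] {Ψ : E → W}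
    (hΨ : AEStronglyMeasurable Ψ μ) (r : ℝ) :
    AEStronglyMeasurable (fun z : E × E => Ψ (z.1 + r • z.2)) (μ.prod μ) :=
  hΨ.comp_quasiMeasurePreserving <|
    (LinearMap.fst ℝ E E + r • LinearMap.snd ℝ E E).quasiMeasurePreserving_of_surjective _ _
      fun x => ⟨(x, 0), by simp⟩

section Translates

variable {G W V : Type*} [MeasurableSpace G] [AddGroup G] [MeasurableAdd G] {μ : Measure G}
  [μ.IsAddRightInvariant] [NormedAddCommGroup W] {Ψ : G → W}

theorem lintegral_enorm_comp_add_mul_enorm_comp_sub_le (hΨ : AEStronglyMeasurable Ψ μ)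
    (a b : G) : ∫⁻ x, ‖Ψ (x + a)‖ₑ * ‖Ψ (x - b)‖ₑ ∂μ ≤ eLpNorm Ψ 2 μ ^ 2 := by
  have hadd := measurePreserving_add_right μ a
  have hsub := measurePreserving_sub_right μ b
  have hHolder := eLpNorm_le_eLpNorm_mul_eLpNorm'_of_norm (p := 2) (q := 2) (r := 1)
    (hΨ.comp_measurePreserving hadd) (hΨ.comp_measurePreserving hsub)
    (fun u v : W => ‖u‖ * ‖v‖) 1 (Eventually.of_forall fun x => by simp)
  rw [eLpNorm_one_eq_lintegral_enorm, eLpNorm_comp_measurePreserving hΨ hadd,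
    eLpNorm_comp_measurePreserving hΨ hsub] at hHolder
  simpa [enorm_mul, sq] using hHolder

variable [SFinite μ]

/-- Tonelli's inequality `lintegral_prod_le` needs no measurability of `h`. -/
theorem lintegral_enorm_le_of_norm_le_mul_translates [NormedAddCommGroup V] {h : G × G → V}
    (hΨ : MemLp Ψ 2 μ) {k : G → ℝ} {a b : G → G}
    (hbound : ∀ x y, ‖h (x, y)‖ ≤ k y * (‖Ψ (x + a y)‖ * ‖Ψ (x - b y)‖)) :
    ∫⁻ z, ‖h z‖ₑ ∂μ.prod μ ≤ (∫⁻ y, ENNReal.ofReal (k y) ∂μ) * eLpNorm Ψ 2 μ ^ 2 := by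
  calc ∫⁻ z, ‖h z‖ₑ ∂μ.prod μ = ∫⁻ z, ‖h z.swap‖ₑ ∂μ.prod μ := (lintegral_prod_swap _).symm
    _ ≤ ∫⁻ y, ∫⁻ x, ‖h (x, y)‖ₑ ∂μ ∂μ := lintegral_prod_le _
    _ ≤ ∫⁻ y, ENNReal.ofReal (k y) * eLpNorm Ψ 2 μ ^ 2 ∂μ := by
        refine lintegral_mono fun y => ?_
        calc ∫⁻ x, ‖h (x, y)‖ₑ ∂μ
            ≤ ∫⁻ x, ENNReal.ofReal (k y) * (‖Ψ (x + a y)‖ₑ * ‖Ψ (x - b y)‖ₑ) ∂μ := by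
              refine lintegral_mono fun x => ?_
              rw [← ofReal_norm, ← ofReal_norm, ← ofReal_norm,
                ← ENNReal.ofReal_mul (norm_nonneg _), ← ENNReal.ofReal_mul' (by positivity)]
              exact ENNReal.ofReal_le_ofReal (hbound x y)
          _ ≤ ENNReal.ofReal (k y) * eLpNorm Ψ 2 μ ^ 2 := by
              rw [lintegral_const_mul' _ _ ENNReal.ofReal_ne_top]
              gcongr
              exact lintegral_enorm_comp_add_mul_enorm_comp_sub_le hΨ.1 (a y) (b y)
    _ = (∫⁻ y, ENNReal.ofReal (k y) ∂μ) * eLpNorm Ψ 2 μ ^ 2 :=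
        lintegral_mul_const' _ _ (ENNReal.pow_ne_top hΨ.eLpNorm_ne_top)

theorem integrable_and_norm_integral_le_of_norm_le_mul_translates [NormedAddCommGroup V]
    [NormedSpace ℝ V] {h : G × G → V} (hΨ : MemLp Ψ 2 μ) (hh : AEStronglyMeasurable h (μ.prod μ))
    {k : G → ℝ} (hk : Integrable k μ) (hk0 : ∀ y, 0 ≤ k y) {a b : G → G}
    (hbound : ∀ x y, ‖h (x, y)‖ ≤ k y * (‖Ψ (x + a y)‖ * ‖Ψ (x - b y)‖)) :
    Integrable h (μ.prod μ) ∧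
      ‖∫ z, h z ∂μ.prod μ‖ ≤ (∫ y, k y ∂μ) * (eLpNorm Ψ 2 μ).toReal ^ 2 := by
  have hlint := lintegral_enorm_le_of_norm_le_mul_translates hΨ hbound
  have hfin : (∫⁻ y, ENNReal.ofReal (k y) ∂μ) * eLpNorm Ψ 2 μ ^ 2 < ⊤ :=
    ENNReal.mul_lt_top hk.lintegral_lt_top (ENNReal.pow_lt_top hΨ.2)
  refine ⟨⟨hh, hlint.trans_lt hfin⟩, ?_⟩
  calc ‖∫ z, h z ∂μ.prod μ‖ ≤ (∫⁻ z, ‖h z‖ₑ ∂μ.prod μ).toReal := by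
        simpa only [ofReal_norm] using norm_integral_le_lintegral_norm h
    _ ≤ ((∫⁻ y, ENNReal.ofReal (k y) ∂μ) * eLpNorm Ψ 2 μ ^ 2).toReal :=
        ENNReal.toReal_mono hfin.ne hlint
    _ = (∫ y, k y ∂μ) * (eLpNorm Ψ 2 μ).toReal ^ 2 := by
        rw [← ofReal_integral_eq_lintegral_ofReal hk (Eventually.of_forall hk0),
          ENNReal.toReal_mul, ENNReal.toReal_pow, ENNReal.toReal_ofReal (integral_nonneg hk0)]

end Translates

theorem abs_centered_difference_quotient_le {E : Type*} [SeminormedAddCommGroup E]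
    [NormedSpace ℝ E] {V : E → ℝ} {L ε : ℝ} (hV : ∀ a b, |V a - V b| ≤ L * ‖a - b‖)
    (hε : 0 < ε) (x y : E) :
    |(V (x + (ε / 2) • y) - V (x - (ε / 2) • y)) / ε| ≤ L * ‖y‖ := by
  rw [abs_div, abs_of_pos hε, div_le_iff₀ hε]
  calc |V (x + (ε / 2) • y) - V (x - (ε / 2) • y)|
      ≤ L * ‖(x + (ε / 2) • y) - (x - (ε / 2) • y)‖ := hV _ _
    _ = L * ‖y‖ * ε := by
        rw [show (x + (ε / 2) • y) - (x - (ε / 2) • y) = ε • y by module, norm_smul,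
          Real.norm_of_nonneg hε.le]
        ring

theorem lipschitz_potential_term_bound_general (d : ℕ) (ε : ℝ) (hε : 0 < ε)
    (V : EuclideanSpace ℝ (Fin d) → ℝ) (L : ℝ)
    (hV : ∀ a b : EuclideanSpace ℝ (Fin d), |V a - V b| ≤ L * ‖a - b‖)
    (Ψ : EuclideanSpace ℝ (Fin d) → ℂ)
    (hΨ : MemLp Ψ 2 (volume : Measure (EuclideanSpace ℝ (Fin d))))
    (φ : SchwartzMap (EuclideanSpace ℝ (Fin d) × EuclideanSpace ℝ (Fin d)) ℂ) :
    Integrable (fun z : EuclideanSpace ℝ (Fin d) × EuclideanSpace ℝ (Fin d) =>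
        (((V (z.1 + (ε / 2) • z.2) - V (z.1 - (ε / 2) • z.2)) / ε : ℝ) : ℂ) *
          Ψ (z.1 + (ε / 2) • z.2) * (starRingEnd ℂ) (Ψ (z.1 - (ε / 2) • z.2)) *
          partialFourierP d (fun q => φ q) z.1 z.2) ∧
      ‖∫ z : EuclideanSpace ℝ (Fin d) × EuclideanSpace ℝ (Fin d),
          (((V (z.1 + (ε / 2) • z.2) - V (z.1 - (ε / 2) • z.2)) / ε : ℝ) : ℂ) *
            Ψ (z.1 + (ε / 2) • z.2) * (starRingEnd ℂ) (Ψ (z.1 - (ε / 2) • z.2)) *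
            partialFourierP d (fun q => φ q) z.1 z.2‖ ≤
        L * (eLpNorm Ψ 2 volume).toReal ^ 2 *
          ∫ y : EuclideanSpace ℝ (Fin d),
            ‖y‖ * ⨆ x : EuclideanSpace ℝ (Fin d), ‖partialFourierP d (fun q => φ q) x y‖ := by
  set F := partialFourierP d (fun q => φ q)
  obtain ⟨C, hC⟩ := exists_bound_partialFourierP φ (Module.finrank ℝ (EuclideanSpace ℝ (Fin d)) + 2)
  have hF : Continuous fun z : EuclideanSpace ℝ (Fin d) × EuclideanSpace ℝ (Fin d) => F z.1 z.2 :=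
    continuous_partialFourierP φ
  have hquot := abs_centered_difference_quotient_le hV hε
  have hLy : ∀ y, 0 ≤ L * ‖y‖ := fun y => (abs_nonneg _).trans (hquot 0 y)
  have hk := (integrable_norm_mul_iSup_norm (μ := volume)
    (fun x => show Continuous (F x) from hF.comp (.prodMk_right x)) hC).const_mul L
  have hk0 : ∀ y, 0 ≤ L * (‖y‖ * ⨆ x, ‖F x y‖) := fun y => by
    rw [← mul_assoc]; exact mul_nonneg (hLy y) (Real.iSup_nonneg fun x => norm_nonneg _)
  refine (integrable_and_norm_integral_le_of_norm_le_mul_translates hΨ ?_ hk hk0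
    (a := fun y => (ε / 2) • y) (b := fun y => (ε / 2) • y) fun x y => ?_).imp_right
    fun h => h.trans_eq (by rw [integral_const_mul]; ring)
  · have hV_cont : Continuous V := (LipschitzWith.of_dist_le' fun a b => by
      simpa [Real.dist_eq, dist_eq_norm] using hV a b).continuous
    have hminus := hΨ.1.comp_fst_add_smul_snd (-(ε / 2))
    simp only [neg_smul, ← sub_eq_add_neg] at hminus
    exact (((Continuous.aestronglyMeasurable (by fun_prop)).mul
      (hΨ.1.comp_fst_add_smul_snd (ε / 2))).mul
      (continuous_star.comp_aestronglyMeasurable hminus)).mul hF.aestronglyMeasurable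
  · have hFg : ‖F x y‖ ≤ ⨆ x, ‖F x y‖ :=
      le_ciSup (bddAbove_range_norm_of_one_add_norm_pow_mul_le hC y) x
    simp only [norm_mul, Complex.norm_real, Real.norm_eq_abs, Complex.norm_conj]
    calc _ ≤ L * ‖y‖ * ‖Ψ (x + (ε / 2) • y)‖ * ‖Ψ (x - (ε / 2) • y)‖ * ⨆ x, ‖F x y‖ := by
          gcongr
          · exact mul_nonneg (mul_nonneg (hLy y) (norm_nonneg _)) (norm_nonneg _)
          · exact hquot x y
      _ = _ := by ring

/-- Bound on the potential term of the Wigner equation for a Lipschitz potential `V`: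
the integrand is absolutely integrable and
`|∫ [(V(x+εy/2)−V(x−εy/2))/ε] Ψ(x+εy/2) conj(Ψ(x−εy/2)) (F_pφ)(x,y) d(x,y)|
  ≤ L ‖Ψ‖² ∫ |y| sup_x |(F_pφ)(x,y)| dy`. -/
theorem lipschitz_potential_term_bound (d : ℕ) (hd : 1 ≤ d) (ε : ℝ) (hε : 0 < ε)
    (V : EuclideanSpace ℝ (Fin d) → ℝ) (L : ℝ)
    (hV : ∀ a b : EuclideanSpace ℝ (Fin d), |V a - V b| ≤ L * ‖a - b‖)
    (Ψ : EuclideanSpace ℝ (Fin d) → ℂ)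
    (hΨ : MemLp Ψ 2 (volume : Measure (EuclideanSpace ℝ (Fin d))))
    (φ : SchwartzMap (EuclideanSpace ℝ (Fin d) × EuclideanSpace ℝ (Fin d)) ℂ) :
    Integrable (fun z : EuclideanSpace ℝ (Fin d) × EuclideanSpace ℝ (Fin d) =>
        (((V (z.1 + (ε / 2) • z.2) - V (z.1 - (ε / 2) • z.2)) / ε : ℝ) : ℂ) *
          Ψ (z.1 + (ε / 2) • z.2) * (starRingEnd ℂ) (Ψ (z.1 - (ε / 2) • z.2)) *
          partialFourierP d (fun q => φ q) z.1 z.2) ∧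
      ‖∫ z : EuclideanSpace ℝ (Fin d) × EuclideanSpace ℝ (Fin d),
          (((V (z.1 + (ε / 2) • z.2) - V (z.1 - (ε / 2) • z.2)) / ε : ℝ) : ℂ) *
            Ψ (z.1 + (ε / 2) • z.2) * (starRingEnd ℂ) (Ψ (z.1 - (ε / 2) • z.2)) *
            partialFourierP d (fun q => φ q) z.1 z.2‖ ≤
        L * (eLpNorm Ψ 2 volume).toReal ^ 2 *
          ∫ y : EuclideanSpace ℝ (Fin d),
            ‖y‖ * ⨆ x : EuclideanSpace ℝ (Fin d), ‖partialFourierP d (fun q => φ q) x y‖ :=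
  lipschitz_potential_term_bound_general d ε hε V L hV Ψ hΨ φ
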